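/- Let G be a finite group such that C_G(F(G)) ≤ F(G) and such that [x, F(G)] is a normal subset of F(G) for every small element x of G. Then every small element of G lies in the second center Z_2(F(G)) of the Fitting subgroup F(G); in particular M(G) ≤ Z_2(F(G)). -/

import Mathlib

/-- The size of the conjugacy class of `x` in `G`. -/
noncomputable def classCard {G : Type*} [Group G] (x : G) : ℕ := Nat.card (conjugatesOf x)

/-- An element `x` is *small* if its conjugacy class size is among the two smallest
conjugacy class sizes of `G`, i.e. at most one conjugacy class size is strictly
smaller than that of `x`. -/
def IsSmall {G : Type*} [Group G] (x : G) : Prop :=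
  {n : ℕ | (∃ g : G, classCard g = n) ∧ n < classCard x}.Subsingleton

/-- `M G` is the subgroup generated by all small elements of `G`. -/
def smallGen (G : Type*) [Group G] : Subgroup G := Subgroup.closure {x : G | IsSmall x}

/-- `[x, K] = {x⁻¹k⁻¹xk : k ∈ K}`. -/
def commSet {G : Type*} [Group G] (x : G) (K : Set G) : Set G :=
  {y | ∃ k ∈ K, y = x⁻¹ * k⁻¹ * x * k}

/-- `[A, x] = {a⁻¹x⁻¹ax : a ∈ A}`. -/
def commSet' {G : Type*} [Group G] (A : Set G) (x : G) : Set G :=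
  {y | ∃ a ∈ A, y = a⁻¹ * x⁻¹ * a * x}

/-- `S` is a normal subset of `K`: `k⁻¹Sk = S` for all `k ∈ K`. -/
def IsNormalSubsetOf {G : Type*} [Group G] (S K : Set G) : Prop :=
  ∀ k ∈ K, (fun s => k⁻¹ * s * k) '' S = S

/-- The Fitting subgroup: the join of all nilpotent normal subgroups (for a finite
group, its largest nilpotent normal subgroup). -/
def fittingSubgroup (G : Type*) [Group G] : Subgroup G :=
  ⨆ H ∈ {H : Subgroup G | H.Normal ∧ Group.IsNilpotent ↥H}, H

/-! Smallness of `x` together with the normality of `S = [x, F]` in `F = F(G)` forces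
`S ⊆ Z(G)`: comparing orbits under the conjugations stabilising `S`, a non-central `s ∈ S`
would have all of `S ∋ 1` as its orbit. Hence `x` lies in the preimage `X` of
`C_{G/Z}(FZ/Z)`, a normal subgroup that is nilpotent because `C_G(F) ≤ F`; so `X ≤ F`, and
`[x, F] ⊆ Z(G) ∩ F` puts `x` into `Z₂(F)`. -/

open MulAction Pointwise commutatorElement

section OrbitStabilizer

variable {H α : Type*} [Group H] [MulAction H α]

theorem MulAction.card_orbit_mul_card_stabilizer (a : α) :
    Nat.card (orbit H a) * Nat.card (stabilizer H a) = Nat.card H := by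
  rw [Nat.card_coe_set_eq, ← index_stabilizer, mul_comm, Subgroup.card_mul_index]

theorem MulAction.card_orbit_le_iff [Finite H] {a b : α} :
    Nat.card (orbit H a) ≤ Nat.card (orbit H b) ↔
      Nat.card (stabilizer H b) ≤ Nat.card (stabilizer H a) := by
  have ha := card_orbit_mul_card_stabilizer (H := H) a
  have hb := card_orbit_mul_card_stabilizer (H := H) b
  have hpos : 0 < Nat.card H := Nat.card_pos
  have ha₀ := Nat.pos_of_mul_pos_left (ha ▸ hpos : 0 < _)
  have ha₁ := Nat.pos_of_mul_pos_right (ha ▸ hpos : 0 < _)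
  constructor
  · intro h
    refine Nat.le_of_mul_le_mul_left ?_ ha₁
    calc _ ≤ Nat.card (orbit H b) * Nat.card (stabilizer H b) := Nat.mul_le_mul_right _ h
      _ = _ := by rw [ha, hb]
  · intro h
    refine Nat.le_of_mul_le_mul_right ?_ ha₀
    calc _ = Nat.card (orbit H b) * Nat.card (stabilizer H b) := by rw [ha, hb]
      _ ≤ _ := Nat.mul_le_mul_left _ h

theorem MulAction.card_stabilizer_subgroup_le [Finite H] (U : Subgroup H) (a : α) :
    Nat.card (stabilizer U a) ≤ Nat.card (stabilizer H a) :=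
  Nat.card_le_card_of_injective (fun u => ⟨u.1, u.2⟩)
    fun _ _ h => Subtype.ext (Subtype.ext (congrArg (fun g : stabilizer H a => (g : H)) h))

theorem MulAction.card_stabilizer_le_subgroup [Finite H] {U : Subgroup H} {a : α}
    (hU : stabilizer H a ≤ U) : Nat.card (stabilizer H a) ≤ Nat.card (stabilizer U a) :=
  Nat.card_le_card_of_injective (fun g => ⟨⟨g, hU g.2⟩, g.2⟩)
    fun _ _ h => Subtype.ext (congrArg (fun u : stabilizer U a => (u : H)) h)

end OrbitStabilizer

section ClassSize

variable {G : Type*} [Group G]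

theorem classCard_eq_card_orbit (g : G) : classCard g = Nat.card (orbit (ConjAct G) g) := by
  have : conjugatesOf g = orbit (ConjAct G) g := by
    ext y
    rw [ConjAct.mem_orbit_conjAct, isConj_comm]
    rfl
  rw [classCard, this]

theorem classCard_one : classCard (1 : G) = 1 := by
  have : conjugatesOf (1 : G) = {1} := by
    ext y
    exact isConj_one_right
  rw [classCard, this, Nat.card_unique]

theorem one_lt_classCard [Finite G] {s : G} (hs : s ∉ Subgroup.center G) : 1 < classCard s := by
  obtain ⟨g, hg⟩ : ∃ g : G, g * s ≠ s * g := by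
    simpa [Subgroup.mem_center_iff] using hs
  rw [classCard, Nat.card_coe_set_eq, Set.one_lt_ncard_iff]
  refine ⟨s, g * s * g⁻¹, mem_conjugatesOf_self, isConj_iff.mpr ⟨g, rfl⟩,
    fun h => hg (mul_inv_eq_iff_eq_mul.mp h.symm)⟩

theorem IsSmall.classCard_le [Finite G] {x s : G} (hx : IsSmall x) (hs : s ∉ Subgroup.center G) :
    classCard x ≤ classCard s := by
  by_contra! h
  have := hx ⟨⟨s, rfl⟩, h⟩ ⟨⟨1, classCard_one⟩, (one_lt_classCard hs).trans h⟩
  exact (one_lt_classCard hs).ne' this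

theorem IsSmall.card_stabilizer_le [Finite G] {x s : G} (hx : IsSmall x)
    (hs : s ∉ Subgroup.center G) :
    Nat.card (stabilizer (ConjAct G) s) ≤ Nat.card (stabilizer (ConjAct G) x) := by
  have : Finite (ConjAct G) := ‹Finite G›
  rw [← card_orbit_le_iff, ← classCard_eq_card_orbit, ← classCard_eq_card_orbit]
  exact hx.classCard_le hs

end ClassSize

section CommSet

variable {G : Type*} [Group G]

theorem IsNormalSubsetOf.toConjAct_inv_mem_stabilizer {S K : Set G} (h : IsNormalSubsetOf S K)
    {k : G} (hk : k ∈ K) : ConjAct.toConjAct k⁻¹ ∈ stabilizer (ConjAct G) S := by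
  have hconj : (ConjAct.toConjAct k⁻¹ • · : G → G) = fun s => k⁻¹ * s * k := by
    funext s
    rw [ConjAct.smul_def, ConjAct.ofConjAct_toConjAct, inv_inv]
  rw [mem_stabilizer_iff, ← Set.image_smul, hconj, h k hk]

theorem smul_mem_commSet {K : Subgroup G} [K.Normal] {x t : G} {c : ConjAct G}
    (hc : c • x = x) (ht : t ∈ commSet x K) : c • t ∈ commSet x K := by
  obtain ⟨k, hk, rfl⟩ := ht
  refine ⟨c • k, ?_, ?_⟩
  · rw [ConjAct.smul_def]
    exact ‹K.Normal›.conj_mem k hk _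
  · rw [smul_mul', smul_mul', smul_mul', smul_inv', smul_inv', hc]

theorem stabilizer_le_stabilizer_commSet (K : Subgroup G) [K.Normal] (x : G) :
    stabilizer (ConjAct G) x ≤ stabilizer (ConjAct G) (commSet x K) := by
  intro c hc
  rw [mem_stabilizer_set]
  refine fun t => ⟨fun h => ?_, smul_mem_commSet hc⟩
  simpa using smul_mem_commSet (c := c⁻¹) (by rw [inv_smul_eq_iff, hc]) h

theorem mul_mem_orbit_of_mem_commSet {K : Set G} {x t : G} (ht : t ∈ commSet x K)
    {U : Subgroup (ConjAct G)} (hU : ∀ k ∈ K, ConjAct.toConjAct k⁻¹ ∈ U) :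
    x * t ∈ orbit U x := by
  obtain ⟨k, hk, rfl⟩ := ht
  refine ⟨⟨_, hU k hk⟩, ?_⟩
  change ConjAct.toConjAct k⁻¹ • x = _
  rw [ConjAct.smul_def, ConjAct.ofConjAct_toConjAct]
  group

theorem one_mem_commSet {K : Subgroup G} (x : G) : (1 : G) ∈ commSet x K :=
  ⟨1, K.one_mem, by group⟩

/-- With `U` the stabilizer of `S = [x, K]` under conjugation, the orbit `xS ⊆ x^U` forces
`|S| ≤ |x^U|`, while a non-central `s ∈ S` has `|C(s)| ≤ |C(x)| ≤ |U_x|` by smallness, so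
`|S| ≤ |s^U|`; hence `s^U = S ∋ 1`, which is absurd. -/
theorem commSet_subset_center [Finite G] {K : Subgroup G} [K.Normal] {x : G} (hx : IsSmall x)
    (hns : IsNormalSubsetOf (commSet x K) K) : commSet x K ⊆ Subgroup.center G := by
  intro s hs
  by_contra hsZ
  have : Finite (ConjAct G) := ‹Finite G›
  set S := commSet x K
  set U := stabilizer (ConjAct G) S
  have hxS : S.ncard ≤ (orbit U x).ncard := by
    rw [← Set.ncard_image_of_injective S (mul_right_injective x)]
    exact Set.ncard_le_ncard (Set.image_subset_iff.mpr fun t ht =>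
      mul_mem_orbit_of_mem_commSet ht fun k hk => hns.toConjAct_inv_mem_stabilizer hk)
  have hsS : orbit U s ⊆ S := by
    rintro _ ⟨u, rfl⟩
    exact u.2 ▸ Set.smul_mem_smul_set hs
  have hstab : Nat.card (stabilizer U s) ≤ Nat.card (stabilizer U x) :=
    (card_stabilizer_subgroup_le U s).trans <| (hx.card_stabilizer_le hsZ).trans <|
      card_stabilizer_le_subgroup (stabilizer_le_stabilizer_commSet K x)
  have horbit : orbit U s = S := by
    refine Set.eq_of_subset_of_ncard_le hsS (hxS.trans ?_) (Set.toFinite S)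
    rw [← Nat.card_coe_set_eq, ← Nat.card_coe_set_eq]
    exact card_orbit_le_iff.mpr hstab
  obtain ⟨u, hu⟩ : (1 : G) ∈ orbit U s := horbit ▸ one_mem_commSet x
  have hs1 : s = 1 := by simpa [Subgroup.smul_def, ConjAct.smul_def] using hu
  exact hsZ (hs1 ▸ Subgroup.one_mem _)

end CommSet

section CentralizerModCenter

variable {G : Type*} [Group G]

def centralizerModCenter (K : Subgroup G) : Subgroup G :=
  (Subgroup.centralizer
    (K.map (QuotientGroup.mk' (Subgroup.center G)) : Set (G ⧸ Subgroup.center G))).comap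
      (QuotientGroup.mk' (Subgroup.center G))

theorem mem_centralizerModCenter_iff {K : Subgroup G} {g : G} :
    g ∈ centralizerModCenter K ↔ ∀ k ∈ K, ⁅g, k⁆ ∈ Subgroup.center G := by
  simp only [centralizerModCenter, Subgroup.mem_comap, Subgroup.mem_centralizer_iff,
    SetLike.mem_coe, Subgroup.mem_map, forall_exists_index, and_imp, forall_apply_eq_imp_iff₂]
  refine forall₂_congr fun k _ => ?_
  rw [← QuotientGroup.eq_one_iff, ← QuotientGroup.mk'_apply, map_commutatorElement,
    commutatorElement_eq_one_iff_commute, eq_comm]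
  rfl

instance centralizerModCenter_normal (K : Subgroup G) [K.Normal] :
    (centralizerModCenter K).Normal :=
  Subgroup.Normal.comap inferInstance _

theorem commutator_centralizerModCenter_le_center (K : Subgroup G) :
    ⁅centralizerModCenter K, K⁆ ≤ Subgroup.center G :=
  Subgroup.commutator_le.mpr fun _ hg k hk => mem_centralizerModCenter_iff.mp hg k hk

theorem mem_centralizerModCenter_of_commSet_subset_center {K : Subgroup G} {x : G}
    (h : commSet x K ⊆ Subgroup.center G) : x ∈ centralizerModCenter K :=
  inv_inv x ▸ inv_mem (mem_centralizerModCenter_iff.mpr fun k hk =>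
    h ⟨k⁻¹, K.inv_mem hk, by rw [commutatorElement_def, inv_inv, inv_inv]⟩)

/-- By the three subgroups lemma, `[X, X]` centralizes `K`, so `[X, X] ≤ K`, and then
`[X, X, X] ≤ [K, X] ≤ Z(G)`. -/
theorem isNilpotent_centralizerModCenter {K : Subgroup G}
    (hC : Subgroup.centralizer (K : Set G) ≤ K) : Group.IsNilpotent (centralizerModCenter K) := by
  set X := centralizerModCenter K
  have hXK : ⁅⁅X, K⁆, X⁆ = ⊥ :=
    Subgroup.commutator_eq_bot_iff_le_centralizer.mpr <|
      (commutator_centralizerModCenter_le_center K).trans (Subgroup.center_le_centralizer _)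
  have hXX : ⁅X, X⁆ ≤ K :=
    (Subgroup.commutator_eq_bot_iff_le_centralizer.mp <|
      Subgroup.commutator_commutator_eq_bot_of_rotate hXK
        (by rwa [Subgroup.commutator_comm K X])).trans hC
  have h2 : X.lowerCentralSeries 2 ≤ Subgroup.center G :=
    (Subgroup.commutator_mono hXX le_rfl).trans <| by
      rw [Subgroup.commutator_comm]; exact commutator_centralizerModCenter_le_center K
  exact Subgroup.isNilpotent_of_lowerCentralSeries_eq_bot
    (Subgroup.lowerCentralSeries_succ_eq_bot X h2)

end CentralizerModCenter

section Fitting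

variable {G : Type*} [Group G]

instance fittingSubgroup_normal : (fittingSubgroup G).Normal :=
  Subgroup.biSup_normal _ _ fun _ hH => hH.1

theorem le_fittingSubgroup {N : Subgroup G} (hN : N.Normal) (hnil : Group.IsNilpotent N) :
    N ≤ fittingSubgroup G :=
  le_biSup id (show N ∈ {H : Subgroup G | H.Normal ∧ Group.IsNilpotent H} from ⟨hN, hnil⟩)

end Fitting

theorem Subgroup.mem_upperCentralSeries_two_of_commutator_mem_center {G : Type*} [Group G]
    {H : Subgroup G} {x : G} (hx : x ∈ H) (h : ∀ y ∈ H, ⁅x, y⁆ ∈ Subgroup.center G) :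
    (⟨x, hx⟩ : H) ∈ Subgroup.upperCentralSeries H 2 := by
  rw [Subgroup.mem_upperCentralSeries_succ_iff, upperCentralSeries_one]
  exact fun y => Subgroup.mem_center_iff.mpr fun g =>
    Subtype.ext (Subgroup.mem_center_iff.mp (h y y.2) g)

/-- If `C_G(F(G)) ≤ F(G)` and `[x, F(G)]` is a normal subset of `F(G)` for every small
element `x` of the finite group `G`, then every small element of `G` lies in the second
center `Z₂(F(G))`; in particular `M(G) ≤ Z₂(F(G))`. -/
theorem stmt_4 {G : Type*} [Group G] [Finite G]
    (hC : Subgroup.centralizer (fittingSubgroup G : Set G) ≤ fittingSubgroup G)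
    (hns : ∀ x : G, IsSmall x →
      IsNormalSubsetOf (commSet x (fittingSubgroup G : Set G)) (fittingSubgroup G : Set G)) :
    (∀ x : G, IsSmall x → ∃ hx : x ∈ fittingSubgroup G,
      (⟨x, hx⟩ : fittingSubgroup G) ∈ upperCentralSeries ↥(fittingSubgroup G) 2) ∧
    smallGen G ≤ (upperCentralSeries ↥(fittingSubgroup G) 2).map (fittingSubgroup G).subtype := by
  set F := fittingSubgroup G
  have hXF : centralizerModCenter F ≤ F :=
    le_fittingSubgroup inferInstance (isNilpotent_centralizerModCenter hC)
  have small_mem : ∀ x : G, IsSmall x →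
      ∃ hx : x ∈ F, (⟨x, hx⟩ : F) ∈ Subgroup.upperCentralSeries F 2 := by
    intro x hx
    have hxX : x ∈ centralizerModCenter F :=
      mem_centralizerModCenter_of_commSet_subset_center (commSet_subset_center hx (hns x hx))
    exact ⟨hXF hxX, Subgroup.mem_upperCentralSeries_two_of_commutator_mem_center _
      (mem_centralizerModCenter_iff.mp hxX)⟩
  refine ⟨small_mem, (Subgroup.closure_le _).mpr fun x hx => ?_⟩
  obtain ⟨hxF, hx2⟩ := small_mem x hx
  exact ⟨⟨x, hxF⟩, hx2, rfl⟩
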